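/- arXiv:2403.18758 — 2 statements merged into one kernel-verified Lean document; each statement's English description precedes it below -/
import Mathlib

section
/- Let k be a field, G a group, H ≤ G a subgroup whose group algebra k[H] is left coherent, and suppose every finitely generated subgroup of G is contained in a subgroup K ≤ G with k[K] left coherent. If every finitely generated left ideal of k[G] is generated by elements of k[K] for some such K, then every finitely generated left ideal of k[G] is finitely presented. In particular, if every finitely generated subgroup H of G has coherent group algebra k[H], then k[G] is left coherent. -/
/-- A ring `R` is left coherent if every finitely generated left ideal of `R` is finitely
presented as an `R`-module. -/
def LeftCoherent (R : Type) [Ring R] : Prop :=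
  ∀ I : Ideal R, I.FG → Module.FinitePresentation R I

/-!
Choosing coset representatives makes `k[G]` a free right `k[K]`-module. A relation in `k[G]`
among the images of `s₁, …, sₙ ∈ k[K]` therefore splits along the cosets of `K` into relations
among the `sᵢ` in `k[K]`, so the relations of the left ideal `k[G]·{sᵢ}` are generated by those of
`k[K]·{sᵢ}`, which are finitely generated when `k[K]` is left coherent.
-/

open Submodule Finsupp

theorem Module.finitePresentation_span_range_iff {R M ι : Type*} [Ring R] [AddCommGroup M]
    [Module R M] [Finite ι] (v : ι → M) :
    Module.FinitePresentation R (span R (Set.range v)) ↔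
      (LinearMap.ker (linearCombination R v)).FG := by
  let l : (ι →₀ R) →ₗ[R] span R (Set.range v) :=
    (linearCombination R v).codRestrict _ fun x => by
      rw [← range_linearCombination]; exact LinearMap.mem_range_self _ x
  have hl : Function.Surjective l := by
    rintro ⟨y, hy⟩
    rw [← range_linearCombination] at hy
    obtain ⟨x, rfl⟩ := hy
    exact ⟨x, rfl⟩
  rw [← Module.FinitePresentation.fg_ker_iff l hl, LinearMap.ker_codRestrict]

namespace Finsupp

variable {R A ι : Type*} [Ring R] [Ring A]

lemma linearCombination_mapRange (f : R →+* A) (s : ι → R) (w : ι →₀ R) :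
    linearCombination A (f ∘ s) (w.mapRange f (map_zero f)) = f (linearCombination R s w) := by
  simp only [linearCombination_apply, map_finsuppSum, smul_eq_mul, map_mul, Function.comp_apply]
  exact sum_mapRange_index fun i => zero_mul _

lemma span_mapRange_image_span (f : R →+* A) (W : Set (ι →₀ R)) :
    span A (mapRange f (map_zero f) '' span R W) = span A (mapRange f (map_zero f) '' W) := by
  refine le_antisymm (span_le.mpr ?_) (span_mono (Set.image_mono subset_span))
  rintro _ ⟨w, hw, rfl⟩
  induction hw using span_induction with
  | mem w hw => exact subset_span ⟨w, hw, rfl⟩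
  | zero => simp
  | add v w _ _ hv hw => rw [mapRange_add (map_add f)]; exact add_mem hv hw
  | smul r w _ hw =>
    rw [mapRange_smul' r (f r) w (map_mul f r)]
    exact smul_mem _ _ hw

end Finsupp

-- `A`, a right `R`-module through `f`, as a retract of the free module `R^(C)`: `coord` is a
-- right `R`-linear section of `y ↦ ∑ c, gen c * f (y c)`.
structure RightRetractOfFree {R A : Type*} [Semiring R] [Semiring A] (f : R →+* A)
    (C : Type*) where
  coord : A →+ (C →₀ R)
  gen : C → A
  coord_mul_apply (a : A) (r : R) (c : C) : coord (a * f r) c = coord a c * r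
  sum_coord (a : A) : (coord a).sum (fun c r => gen c * f r) = a

namespace RightRetractOfFree

variable {R A C ι : Type*} [Ring R] [Ring A] {f : R →+* A}

lemma coord_linearCombination (P : RightRetractOfFree f C) (s : ι → R) (x : ι →₀ A) (c : C) :
    P.coord (linearCombination A (f ∘ s) x) c =
      linearCombination R s (x.mapRange (P.coord · c) (by simp)) := by
  simp only [linearCombination_apply, map_finsuppSum, Finsupp.sum_apply, smul_eq_mul,
    Function.comp_apply, P.coord_mul_apply]
  rw [sum_mapRange_index (by simp)]

lemma eq_sum_smul_mapRange_coord (P : RightRetractOfFree f C) [Fintype ι] [DecidableEq C]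
    (x : ι →₀ A) :
    x = ∑ c ∈ Finset.univ.biUnion (fun i => (P.coord (x i)).support),
      P.gen c • x.mapRange (f ∘ (P.coord · c)) (by simp) := by
  ext i
  conv_lhs => rw [← P.sum_coord (x i)]
  rw [Finsupp.finsetSum_apply]
  exact Finsupp.sum_of_support_subset _
    (Finset.subset_biUnion_of_mem (fun i => (P.coord (x i)).support) (Finset.mem_univ i)) _
    (by simp)

lemma ker_linearCombination_le (P : RightRetractOfFree f C) [Finite ι] (s : ι → R) :
    LinearMap.ker (linearCombination A (f ∘ s)) ≤
      span A (mapRange f (map_zero f) '' LinearMap.ker (linearCombination R s)) := by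
  classical
  have := Fintype.ofFinite ι
  intro x hx
  rw [P.eq_sum_smul_mapRange_coord x]
  refine sum_mem fun c _ => smul_mem _ _ (subset_span ⟨x.mapRange (P.coord · c) (by simp), ?_, ?_⟩)
  · rw [SetLike.mem_coe, LinearMap.mem_ker, ← P.coord_linearCombination, LinearMap.mem_ker.mp hx,
      map_zero, Finsupp.zero_apply]
  · rw [mapRange_comp]

theorem finitePresentation_span_image (P : RightRetractOfFree f C) (S : Finset R)
    (hS : Module.FinitePresentation R (span R (S : Set R))) :
    Module.FinitePresentation A (span A (f '' S)) := by
  classical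
  rw [← Subtype.range_coe (s := (S : Set R))] at hS
  obtain ⟨W, hW⟩ := (Module.finitePresentation_span_range_iff _).mp hS
  rw [← Subtype.range_coe (s := (S : Set R)), ← Set.range_comp,
    Module.finitePresentation_span_range_iff]
  refine ⟨W.image (mapRange f (map_zero f)), le_antisymm ?_ ?_⟩
  · rw [Finset.coe_image, span_le]
    rintro _ ⟨w, hw, rfl⟩
    have hw_ker : w ∈ LinearMap.ker (linearCombination R ((↑) : ↥(S : Set R) → R)) :=
      hW ▸ subset_span hw
    rw [SetLike.mem_coe, LinearMap.mem_ker, linearCombination_mapRange, LinearMap.mem_ker.mp hw_ker,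
      map_zero]
  · rw [Finset.coe_image, ← span_mapRange_image_span, hW]
    exact P.ker_linearCombination_le _

end RightRetractOfFree

namespace Subgroup

variable {G : Type*} [Group G] (K : Subgroup G)

noncomputable def cosetRepEquiv : G ≃ (G ⧸ K) × K where
  toFun g := (g, ⟨(g : G ⧸ K).out⁻¹ * g, by rw [← QuotientGroup.eq, QuotientGroup.out_eq']⟩)
  invFun p := p.1.out * p.2
  left_inv g := mul_inv_cancel_left _ _
  right_inv := by
    rintro ⟨c, κ⟩
    have hc : ((c.out * κ : G) : G ⧸ K) = c := by
      rw [QuotientGroup.mk_mul_of_mem _ κ.2, QuotientGroup.out_eq']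
    ext
    · exact hc
    · simp only [hc, inv_mul_cancel_left]

@[simp]
lemma cosetRepEquiv_symm_apply (c : G ⧸ K) (κ : K) : K.cosetRepEquiv.symm (c, κ) = c.out * κ :=
  rfl

lemma cosetRepEquiv_mul (g : G) (κ : K) :
    K.cosetRepEquiv (g * κ) = ((K.cosetRepEquiv g).1, (K.cosetRepEquiv g).2 * κ) := by
  have hκ : ((g * κ : G) : G ⧸ K) = g := QuotientGroup.mk_mul_of_mem g κ.2
  ext
  · exact hκ
  · simp only [cosetRepEquiv, Equiv.coe_fn_mk, coe_mul, hκ, mul_assoc]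

end Subgroup

namespace MonoidAlgebra

variable (k : Type*) {G : Type*} [Semiring k] [Group G] (K : Subgroup G)

noncomputable def subgroupCoord : MonoidAlgebra k G →+ (G ⧸ K →₀ MonoidAlgebra k K) :=
  (((coeffAddEquiv.trans (Finsupp.domCongr K.cosetRepEquiv)).trans Finsupp.curryAddEquiv).trans
    (Finsupp.mapRange.addEquiv coeffAddEquiv.symm) : MonoidAlgebra k G ≃+ _)

variable {k K}

lemma subgroupCoord_single (g : G) (b : k) :
    subgroupCoord k K (single g b) =
      Finsupp.single (K.cosetRepEquiv g).1 (single (K.cosetRepEquiv g).2 b) := by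
  simp [subgroupCoord]

lemma subgroupCoord_mul_apply (a : MonoidAlgebra k G) (r : MonoidAlgebra k K) (c : G ⧸ K) :
    subgroupCoord k K (a * mapDomainRingHom k K.subtype r) c = subgroupCoord k K a c * r := by
  classical
  induction a using MonoidAlgebra.induction_linear with
  | zero => simp
  | add a a' ha ha' => simp only [add_mul, map_add, Finsupp.add_apply, ha, ha']
  | single g b =>
    induction r using MonoidAlgebra.induction_linear with
    | zero => simp
    | add r r' hr hr' => simp only [map_add, mul_add, Finsupp.add_apply, hr, hr']
    | single κ d =>
      rw [mapDomainRingHom_apply, mapDomain_single, K.coe_subtype, single_mul_single,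
        subgroupCoord_single, subgroupCoord_single, K.cosetRepEquiv_mul, Finsupp.single_apply,
        Finsupp.single_apply]
      split_ifs
      · rw [single_mul_single]
      · rw [zero_mul]

lemma sum_subgroupCoord (a : MonoidAlgebra k G) :
    (subgroupCoord k K a).sum (fun c r => single c.out 1 * mapDomainRingHom k K.subtype r) = a := by
  induction a using MonoidAlgebra.induction_linear with
  | zero => simp
  | add a a' ha ha' =>
    rw [map_add, Finsupp.sum_add_index' (by simp) (fun _ _ _ => by rw [map_add, mul_add]), ha, ha']
  | single g b =>
    rw [subgroupCoord_single, Finsupp.sum_single_index (by simp), mapDomainRingHom_apply,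
      mapDomain_single, K.coe_subtype, single_mul_single, one_mul, ← K.cosetRepEquiv_symm_apply,
      Prod.mk.eta, Equiv.symm_apply_apply]

variable (k K)

noncomputable def subgroupRightRetractOfFree :
    RightRetractOfFree (mapDomainRingHom k K.subtype) (G ⧸ K) where
  coord := subgroupCoord k K
  gen c := single c.out 1
  coord_mul_apply := subgroupCoord_mul_apply
  sum_coord := sum_subgroupCoord

end MonoidAlgebra

theorem groupAlgebra_left_coherent_general
    (k : Type) [Field k] (G : Type) [Group G]
    (hideals : ∀ I : Ideal (MonoidAlgebra k G), I.FG →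
      ∃ K : Subgroup G, LeftCoherent (MonoidAlgebra k K) ∧
        ∃ S : Finset (MonoidAlgebra k K),
          I = Submodule.span (MonoidAlgebra k G)
            (⇑(MonoidAlgebra.mapDomainRingHom k K.subtype) '' (S : Set (MonoidAlgebra k K)))) :
    (∀ I : Ideal (MonoidAlgebra k G), I.FG → Module.FinitePresentation (MonoidAlgebra k G) I) ∧
    ((∀ H' : Subgroup G, H'.FG → LeftCoherent (MonoidAlgebra k H')) →
      LeftCoherent (MonoidAlgebra k G)) := by
  have hfp : ∀ I : Ideal (MonoidAlgebra k G), I.FG →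
      Module.FinitePresentation (MonoidAlgebra k G) I := by
    intro I hI
    obtain ⟨K, hK, S, rfl⟩ := hideals I hI
    exact (MonoidAlgebra.subgroupRightRetractOfFree k K).finitePresentation_span_image S
      (hK _ ⟨S, rfl⟩)
  exact ⟨hfp, fun _ => hfp⟩

/-- Let `k` be a field, `G` a group, `H ≤ G` a subgroup whose group algebra `k[H]` is left
coherent, and suppose every finitely generated subgroup of `G` is contained in a subgroup
`K ≤ G` with `k[K]` left coherent.  If every finitely generated left ideal of `k[G]` is
generated by (finitely many) elements of `k[K]` for some such `K`, then every finitely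
generated left ideal of `k[G]` is finitely presented.  In particular, if every finitely
generated subgroup `H'` of `G` has coherent group algebra `k[H']`, then `k[G]` is left
coherent. -/
theorem groupAlgebra_left_coherent
    (k : Type) [Field k] (G : Type) [Group G]
    (H : Subgroup G) (hH : LeftCoherent (MonoidAlgebra k H))
    (hcontain : ∀ F : Subgroup G, F.FG →
      ∃ K : Subgroup G, F ≤ K ∧ LeftCoherent (MonoidAlgebra k K))
    (hideals : ∀ I : Ideal (MonoidAlgebra k G), I.FG →
      ∃ K : Subgroup G, LeftCoherent (MonoidAlgebra k K) ∧
        ∃ S : Finset (MonoidAlgebra k K),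
          I = Submodule.span (MonoidAlgebra k G)
            (⇑(MonoidAlgebra.mapDomainRingHom k K.subtype) '' (S : Set (MonoidAlgebra k K)))) :
    (∀ I : Ideal (MonoidAlgebra k G), I.FG → Module.FinitePresentation (MonoidAlgebra k G) I) ∧
    ((∀ H' : Subgroup G, H'.FG → LeftCoherent (MonoidAlgebra k H')) →
      LeftCoherent (MonoidAlgebra k G)) :=
  groupAlgebra_left_coherent_general k G hideals
end

section
/- Let R be a ring of left global dimension n that embeds into a division ring D such that D has weak dimension at most n − 1 as a right R-module (i.e., Tor_n^R(D, M) = 0 for every left R-module M). Then every left ideal of R of type FP_{n−1} is of type FP_n; that is, R is left (n−1)-coherent. -/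
open CategoryTheory

section NCTensor

variable (R : Type) [Ring R] (D : Type) [AddCommGroup D] [Module Rᵐᵒᵖ D]

/-- The balancing relations defining the tensor product `D ⊗_R X` of a right `R`-module `D`
and a left `R`-module `X` as a quotient of `D ⊗_ℤ X`. -/
def balancedRel (X : Type) [AddCommGroup X] [Module R X] :
    Submodule ℤ (TensorProduct ℤ D X) :=
  Submodule.span ℤ
    {z | ∃ (e : D) (r : R) (x : X),
      z = (MulOpposite.op r • e) ⊗ₜ[ℤ] x - e ⊗ₜ[ℤ] (r • x)}

/-- The tensor product `D ⊗_R X` of a right `R`-module `D` and a left `R`-module `X`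
(over a possibly noncommutative ring `R`), as a quotient of `D ⊗_ℤ X` by the balancing
relations. -/
def NCTensor (X : Type) [AddCommGroup X] [Module R X] : Type :=
  TensorProduct ℤ D X ⧸ balancedRel R D X

noncomputable instance (X : Type) [AddCommGroup X] [Module R X] : AddCommGroup (NCTensor R D X) :=
  inferInstanceAs (AddCommGroup (TensorProduct ℤ D X ⧸ balancedRel R D X))

/-- The class of the elementary tensor `e ⊗ x` in `D ⊗_R X`. -/
noncomputable def NCTensor.tmul {X : Type} [AddCommGroup X] [Module R X] (e : D) (x : X) :
    NCTensor R D X :=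
  Submodule.Quotient.mk (e ⊗ₜ[ℤ] x)

/-- Functoriality of `D ⊗_R -` in `R`-linear maps. -/
noncomputable def NCTensor.map {X Y : Type} [AddCommGroup X] [Module R X] [AddCommGroup Y] [Module R Y]
    (f : X →ₗ[R] Y) : NCTensor R D X →ₗ[ℤ] NCTensor R D Y :=
  Submodule.mapQ (balancedRel R D X) (balancedRel R D Y)
    (TensorProduct.map LinearMap.id f.toAddMonoidHom.toIntLinearMap)
    (by
      unfold balancedRel
      rw [Submodule.span_le]
      rintro z ⟨e, r, x, rfl⟩
      simp only [SetLike.mem_coe, Submodule.mem_comap, map_sub, TensorProduct.map_tmul,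
        LinearMap.id_coe, id_eq, AddMonoidHom.coe_toIntLinearMap,
        LinearMap.toAddMonoidHom_coe, map_smul]
      refine Submodule.subset_span ⟨e, r, f x, ?_⟩
      have h := (TensorProduct.map (LinearMap.id (R := ℤ) (M := D))
        f.toAddMonoidHom.toIntLinearMap).map_sub ((MulOpposite.op r • e) ⊗ₜ[ℤ] x) (e ⊗ₜ[ℤ] (r • x))
      rw [TensorProduct.map_tmul, TensorProduct.map_tmul] at h
      simp only [LinearMap.id_coe, id_eq, AddMonoidHom.coe_toIntLinearMap,
        LinearMap.toAddMonoidHom_coe, map_smul] at h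
      exact h)

end NCTensor

section Resolutions

variable (R : Type) [Ring R]

/-- `M` admits a partial resolution by finitely generated free modules up to degree `n`,
i.e. `M` is of type `FP_n` over `R`. -/
def ModuleTypeFPn (M : ModuleCat R) (n : ℕ) : Prop :=
  ∃ (F : ℕ → ModuleCat R) (d : ∀ i, F (i + 1) ⟶ F i) (ε : F 0 ⟶ M),
    (∀ i, i ≤ n → Module.Finite R (F i)) ∧ (∀ i, i ≤ n → Module.Free R (F i)) ∧
    Function.Surjective ε ∧ Function.Exact (d 0) ε ∧
    ∀ i, i + 2 ≤ n → Function.Exact (d (i + 1)) (d i)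

/-- `M` admits a finite length resolution by finitely generated projective modules,
i.e. `M` is of type `FP` over `R`. -/
def ModuleTypeFP (M : ModuleCat R) : Prop :=
  ∃ (m : ℕ) (F : ℕ → ModuleCat R) (d : ∀ i, F (i + 1) ⟶ F i) (ε : F 0 ⟶ M),
    (∀ i, Module.Finite R (F i)) ∧ (∀ i, Module.Projective R (F i)) ∧
    (∀ i, m < i → Subsingleton (F i)) ∧
    Function.Surjective ε ∧ Function.Exact (d 0) ε ∧
    ∀ i, Function.Exact (d (i + 1)) (d i)

/-- `M` admits a projective resolution of length at most `n`. -/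
def HasProjResLen (M : ModuleCat R) (n : ℕ) : Prop :=
  ∃ (F : ℕ → ModuleCat R) (d : ∀ i, F (i + 1) ⟶ F i) (ε : F 0 ⟶ M),
    (∀ i, Module.Projective R (F i)) ∧ (∀ i, n < i → Subsingleton (F i)) ∧
    Function.Surjective ε ∧ Function.Exact (d 0) ε ∧
    ∀ i, Function.Exact (d (i + 1)) (d i)

end Resolutions

/-!
Let `F_{n-1} → ⋯ → F_0 → I → 0` be a resolution of `I` by finitely generated free modules and
`K` the kernel of its last map. As `I` has projective dimension at most `n`, dimension shifting
makes `K` projective, so `0 → K → F_{n-1} → ⋯ → F_0` is a projective resolution of `I` of length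
`n`, and `Tor_n^R(D, I) = 0` says that `D ⊗_R K → D ⊗_R F_{n-1}` is injective. Hence `D ⊗_R K` is a
finite-dimensional left `D`-vector space. For a projective module this forces finite generation:
tensoring the coordinate forms of a dual basis of `K` with `D` gives `D`-linear forms on `D ⊗_R K`,
only finitely many of which are nonzero, and since `R → D` is injective a coordinate vanishes on
`K` as soon as its tensored form does. So `K` is finitely generated and `I` is of type `FP_n`.
-/

universe v w

namespace NCTensor

section AddCommGroup

variable {R : Type} [Ring R] {D : Type} [AddCommGroup D] [Module Rᵐᵒᵖ D]
  {X Z : Type} [AddCommGroup X] [Module R X] [AddCommGroup Z]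

@[elab_as_elim]
theorem induction_on {motive : NCTensor R D X → Prop} (t : NCTensor R D X) (zero : motive 0)
    (tmul : ∀ e x, motive (NCTensor.tmul R D e x))
    (add : ∀ s t, motive s → motive t → motive (s + t)) : motive t := by
  obtain ⟨u, rfl⟩ := Submodule.Quotient.mk_surjective _ t
  induction u using TensorProduct.induction_on with
  | zero => exact zero
  | tmul e x => exact tmul e x
  | add u v hu hv => exact add _ _ hu hv

theorem tmul_add (e : D) (x y : X) :
    NCTensor.tmul R D e (x + y) = NCTensor.tmul R D e x + NCTensor.tmul R D e y := by
  simp only [NCTensor.tmul, TensorProduct.tmul_add, Submodule.Quotient.mk_add]; rfl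

theorem tmul_zero (e : D) : NCTensor.tmul R D e (0 : X) = 0 := by
  simp only [NCTensor.tmul, TensorProduct.tmul_zero, Submodule.Quotient.mk_zero]; rfl

theorem tmul_smul (e : D) (r : R) (x : X) :
    NCTensor.tmul R D e (r • x) = NCTensor.tmul R D (MulOpposite.op r • e) x :=
  ((Submodule.Quotient.eq (balancedRel R D X)).2 (Submodule.subset_span ⟨e, r, x, rfl⟩)).symm

instance [Subsingleton X] : Subsingleton (NCTensor R D X) :=
  (Submodule.mkQ_surjective (balancedRel R D X)).subsingleton

def lift (f : D →ₗ[ℤ] X →ₗ[ℤ] Z) (hf : ∀ e (r : R) x, f (MulOpposite.op r • e) x = f e (r • x)) :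
    NCTensor R D X →ₗ[ℤ] Z :=
  (balancedRel R D X).liftQ (TensorProduct.lift f) <| by
    rw [balancedRel, Submodule.span_le]
    rintro _ ⟨e, r, x, rfl⟩
    show TensorProduct.lift f (_ - _) = 0
    rw [map_sub, TensorProduct.lift.tmul, TensorProduct.lift.tmul, hf, sub_self]

end AddCommGroup

noncomputable section Ring

variable {R : Type} [Ring R] {D : Type} [Ring D] [Module Rᵐᵒᵖ D] [SMulCommClass Rᵐᵒᵖ D D]
  {X Y : Type} [AddCommGroup X] [Module R X] [AddCommGroup Y] [Module R Y]

def mk : D →ₗ[ℤ] X →ₗ[ℤ] NCTensor R D X :=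
  (TensorProduct.mk ℤ D X).compr₂ (balancedRel R D X).mkQ

def lsmul (d : D) : NCTensor R D X →ₗ[ℤ] NCTensor R D X :=
  lift (mk ∘ₗ LinearMap.mulLeft ℤ d) fun e r x => by
    change NCTensor.tmul R D (d * (MulOpposite.op r • e)) x = NCTensor.tmul R D (d * e) (r • x)
    rw [mul_smul_comm, tmul_smul]

instance : SMul D (NCTensor R D X) :=
  ⟨fun d => lsmul d⟩

theorem smul_tmul (d e : D) (x : X) :
    d • NCTensor.tmul R D e x = NCTensor.tmul R D (d * e) x :=
  rfl

instance : Module D (NCTensor R D X) :=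
  Function.Surjective.module D (balancedRel R D X).mkQ.toAddMonoidHom
    (Submodule.mkQ_surjective _) fun d u => by
      change (balancedRel R D X).mkQ (d • u) = lsmul d ((balancedRel R D X).mkQ u)
      induction u using TensorProduct.induction_on with
      | zero => exact (map_zero (lsmul d)).symm
      | tmul e x => rfl
      | add u v hu hv =>
        rw [smul_add, map_add, map_add, hu, hv]
        exact (map_add (lsmul d) _ _).symm

theorem tmul_eq_smul_tmul_one (e : D) (x : X) :
    NCTensor.tmul R D e x = e • NCTensor.tmul R D 1 x := by
  rw [smul_tmul, mul_one]

def mapD (f : X →ₗ[R] Y) : NCTensor R D X →ₗ[D] NCTensor R D Y where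
  toFun := NCTensor.map R D f
  map_add' := map_add _
  map_smul' d t := by
    induction t using induction_on with
    | zero => rw [smul_zero, map_zero, smul_zero]
    | tmul e x => rfl
    | add s t hs ht => rw [smul_add, map_add, map_add, hs, ht, smul_add]

instance [Module.Finite R X] : Module.Finite D (NCTensor R D X) := by
  classical
  obtain ⟨s, hs⟩ := Module.Finite.fg_top (R := R) (M := X)
  set V := Submodule.span D (NCTensor.tmul R D 1 '' (s : Set X))
  have mem_V : ∀ x, NCTensor.tmul R D (1 : D) x ∈ V := by
    intro x
    have hx : x ∈ Submodule.span R (s : Set X) := hs ▸ Submodule.mem_top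
    induction hx using Submodule.span_induction with
    | mem x hx => exact Submodule.subset_span ⟨x, hx, rfl⟩
    | zero => rw [tmul_zero]; exact V.zero_mem
    | add x y _ _ hx hy => rw [tmul_add]; exact V.add_mem hx hy
    | smul r x _ hx => rw [tmul_smul, tmul_eq_smul_tmul_one]; exact V.smul_mem _ hx
  refine ⟨⟨s.image (NCTensor.tmul R D 1), eq_top_iff.2 ?_⟩⟩
  rintro t -
  rw [Finset.coe_image]
  induction t using induction_on with
  | zero => exact V.zero_mem
  | tmul e x => rw [tmul_eq_smul_tmul_one]; exact V.smul_mem e (mem_V x)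
  | add a b ha hb => exact V.add_mem ha hb

def rid : NCTensor R D R →ₗ[D] D where
  toFun := lift (LinearMap.mk₂ ℤ (fun (e : D) (r : R) => MulOpposite.op r • e)
      (fun _ _ _ => smul_add _ _ _) (fun _ _ _ => smul_comm _ _ _)
      (fun _ _ _ => by rw [MulOpposite.op_add, add_smul])
      (fun _ _ _ => by rw [MulOpposite.op_smul, smul_assoc]))
    fun e r x => by simp only [LinearMap.mk₂_apply, smul_eq_mul, MulOpposite.op_mul, mul_smul]
  map_add' := map_add _
  map_smul' d t := by
    induction t using induction_on with
    | zero => rw [smul_zero, map_zero, smul_zero]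
    | tmul e r => exact (mul_smul_comm _ _ _).symm
    | add s t hs ht => rw [smul_add, map_add, map_add, hs, ht, smul_add]

theorem finite_of_projective (hD : Function.Injective fun r : R => MulOpposite.op r • (1 : D))
    [Module.Projective R X] [Module.Finite D (NCTensor R D X)] : Module.Finite R X := by
  classical
  obtain ⟨s, hs⟩ := Module.projective_def.1 ‹Module.Projective R X›
  let coord (j : X) : NCTensor R D X →ₗ[D] D := rid ∘ₗ mapD (Finsupp.lapply j ∘ₗ s)
  have coord_tmul (j : X) (e : D) (x : X) :
      coord j (NCTensor.tmul R D e x) = MulOpposite.op (s x j) • e :=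
    rfl
  have finite_support (t : NCTensor R D X) : ∃ S : Finset X, ∀ j ∉ S, coord j t = 0 := by
    induction t using induction_on with
    | zero => exact ⟨∅, fun j _ => map_zero _⟩
    | tmul e x =>
      refine ⟨(s x).support, fun j hj => ?_⟩
      rw [coord_tmul, Finsupp.notMem_support_iff.1 hj, MulOpposite.op_zero, zero_smul]
    | add a b ha hb =>
      obtain ⟨Sa, hSa⟩ := ha
      obtain ⟨Sb, hSb⟩ := hb
      refine ⟨Sa ∪ Sb, fun j hj => ?_⟩
      rw [Finset.mem_union, not_or] at hj
      rw [map_add, hSa j hj.1, hSb j hj.2, add_zero]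
  choose S hS using finite_support
  obtain ⟨T, hT⟩ := Module.Finite.fg_top (R := D) (M := NCTensor R D X)
  have coord_eq_zero (j : X) (hj : j ∉ T.biUnion S) : coord j = 0 :=
    LinearMap.ext_on hT fun t ht => hS t j fun hjt => hj (Finset.mem_biUnion.2 ⟨t, ht, hjt⟩)
  refine ⟨⟨T.biUnion S, eq_top_iff.2 fun x _ => ?_⟩⟩
  rw [← Set.image_id (T.biUnion S : Set X), Finsupp.mem_span_image_iff_linearCombination]
  refine ⟨s x, (Finsupp.mem_supported R _).2 fun j hj => ?_, hs x⟩
  by_contra hjS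
  have h := LinearMap.congr_fun (coord_eq_zero j hjS) (NCTensor.tmul R D 1 x)
  rw [coord_tmul, LinearMap.zero_apply] at h
  exact Finsupp.mem_support_iff.1 hj (hD (by simpa using h))

end Ring

theorem finite_of_map_injective {R : Type} [Ring R] {D : Type} [DivisionRing D] [Module Rᵐᵒᵖ D]
    [SMulCommClass Rᵐᵒᵖ D D] {X Y : Type} [AddCommGroup X] [Module R X] [AddCommGroup Y]
    [Module R Y] [Module.Finite R Y] (f : X →ₗ[R] Y) (hf : Function.Injective (NCTensor.map R D f)) :
    Module.Finite D (NCTensor R D X) :=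
  have : IsNoetherian D (NCTensor R D Y) := IsNoetherian.iff_fg.2 inferInstance
  Module.Finite.of_injective (mapD f) hf

end NCTensor

section Splicing

variable {R : Type} [Ring R]

noncomputable def kerLift {F₁ F₀ M : ModuleCat.{v} R} (d : F₁ ⟶ F₀) (ε : F₀ ⟶ M)
    (h : Function.Exact d ε) : F₁ ⟶ ModuleCat.of R (LinearMap.ker ε.hom) :=
  ModuleCat.ofHom (d.hom.codRestrict _ fun x => h.apply_apply_eq_zero x)

theorem kerLift_surjective {F₁ F₀ M : ModuleCat.{v} R} {d : F₁ ⟶ F₀} {ε : F₀ ⟶ M}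
    (h : Function.Exact d ε) : Function.Surjective (kerLift d ε h) := by
  rintro ⟨y, hy⟩
  obtain ⟨x, rfl⟩ := (h y).1 hy
  exact ⟨x, rfl⟩

theorem exact_kerLift_iff {F₂ F₁ F₀ M : ModuleCat.{v} R} (d' : F₂ ⟶ F₁) {d : F₁ ⟶ F₀}
    {ε : F₀ ⟶ M} (h : Function.Exact d ε) :
    Function.Exact d' (kerLift d ε h) ↔ Function.Exact d' d :=
  ((LinearMap.ker ε.hom).injective_subtype.comp_exact_iff_exact (f := d'.hom)
    (g := (kerLift d ε h).hom)).symm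

def consObj (P : ModuleCat.{v} R) (F : ℕ → ModuleCat.{v} R) : ℕ → ModuleCat.{v} R
  | 0 => P
  | i + 1 => F i

noncomputable def consHom {P M : ModuleCat.{v} R} (p : P ⟶ M) {F : ℕ → ModuleCat.{v} R}
    (d : ∀ i, F (i + 1) ⟶ F i) (ε : F 0 ⟶ ModuleCat.of R (LinearMap.ker p.hom)) :
    ∀ i, consObj P F (i + 1) ⟶ consObj P F i
  | 0 => ε ≫ ModuleCat.ofHom (LinearMap.ker p.hom).subtype
  | i + 1 => d i

variable {P M : ModuleCat.{v} R} {p : P ⟶ M} {F : ℕ → ModuleCat.{v} R}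
  {d : ∀ i, F (i + 1) ⟶ F i} {ε : F 0 ⟶ ModuleCat.of R (LinearMap.ker p.hom)}

theorem exact_consHom_zero (hε : Function.Surjective ε) : Function.Exact (consHom p d ε 0) p :=
  (hε.comp_exact_iff_exact (f := (LinearMap.ker p.hom).subtype)).2
    (LinearMap.exact_subtype_ker_map p.hom)

theorem exact_consHom_one (h : Function.Exact (d 0) ε) :
    Function.Exact (consHom p d ε 1) (consHom p d ε 0) :=
  ((LinearMap.ker p.hom).injective_subtype.comp_exact_iff_exact (f := (d 0).hom)).2 h

end Splicing

section ProjectiveDimension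

open ModuleCat

variable {R : Type} [Ring R]

theorem hasProjectiveDimensionLT_ker {P M : ModuleCat.{v} R} [Module.Projective R P] (p : P ⟶ M)
    (hp : Function.Surjective p) (k : ℕ) [HasProjectiveDimensionLT M (k + 2)] :
    HasProjectiveDimensionLT (of R (LinearMap.ker p.hom)) (k + 1) :=
  (p.hom.shortExact_shortComplexKer hp).hasProjectiveDimensionLT_X₁ (k + 1)
    (inferInstanceAs (HasProjectiveDimensionLT P (k + 1))) ‹_›

theorem hasProjectiveDimensionLT_of_ker {P M : ModuleCat.{v} R} [Module.Projective R P]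
    (p : P ⟶ M) (hp : Function.Surjective p) (k : ℕ)
    [HasProjectiveDimensionLT (of R (LinearMap.ker p.hom)) k] :
    HasProjectiveDimensionLT M (k + 1) :=
  (p.hom.shortExact_shortComplexKer hp).hasProjectiveDimensionLT_X₃ k ‹_›
    (inferInstanceAs (HasProjectiveDimensionLT P (k + 1)))

theorem hasProjectiveDimensionLT_of_uliftFunctor (M : ModuleCat.{v} R) (n : ℕ)
    [HasProjectiveDimensionLT ((uliftFunctor.{w} R).obj M) (n + 1)] :
    HasProjectiveDimensionLT M (n + 1) := by
  induction n generalizing M with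
  | zero =>
    have : Module.Projective R (ULift.{w} M) := (IsProjective.iff_projective _).2
      (projective_iff_hasProjectiveDimensionLT_one.2 ‹_›)
    have : Module.Projective R M := .of_equiv ULift.moduleEquiv
    infer_instance
  | succ n ih =>
    have hS := M.shortExact_projectiveShortComplex
    have : Projective M.projectiveShortComplex.X₂ := inferInstance
    have hX₁ := (hS.map_of_exact (uliftFunctor.{w} R)).hasProjectiveDimensionLT_X₁ (n + 1)
      (hasProjectiveDimensionLT_of_ge ((uliftFunctor.{w} R).obj _) 1 _ (by omega)) ‹_›
    exact hS.hasProjectiveDimensionLT_X₃ (n + 1) (@ih _ hX₁)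
      (hasProjectiveDimensionLT_of_ge _ 1 _ (by omega))

theorem HasProjResLen.projective {M : ModuleCat.{v} R} (h : HasProjResLen R M 0) :
    Module.Projective R M := by
  obtain ⟨F, d, ε, hproj, hzero, hε, h0, -⟩ := h
  have := hzero 1 one_pos
  have hinj : Function.Injective ε.hom := (injective_iff_map_eq_zero _).2 fun x hx => by
    obtain ⟨y, rfl⟩ := (h0 x).1 hx
    rw [Subsingleton.elim y 0, map_zero]
  exact .of_equiv (LinearEquiv.ofBijective ε.hom ⟨hinj, hε⟩)

theorem HasProjResLen.exists_ker {M : ModuleCat.{v} R} {n : ℕ} (h : HasProjResLen R M (n + 1)) :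
    ∃ (P : ModuleCat.{v} R) (p : P ⟶ M), Module.Projective R P ∧ Function.Surjective p ∧
      HasProjResLen R (of R (LinearMap.ker p.hom)) n := by
  obtain ⟨F, d, ε, hproj, hzero, hε, h0, hex⟩ := h
  exact ⟨F 0, ε, hproj 0, hε, fun i => F (i + 1), fun i => d (i + 1), kerLift (d 0) ε h0,
    fun i => hproj (i + 1), fun i hi => hzero (i + 1) (by omega), kerLift_surjective h0,
    (exact_kerLift_iff _ h0).2 (hex 0), fun i => hex (i + 1)⟩

theorem hasProjectiveDimensionLE_of_hasProjResLen {M : ModuleCat.{v} R} {n : ℕ}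
    (h : HasProjResLen R M n) : HasProjectiveDimensionLE M n := by
  induction n generalizing M with
  | zero =>
    have := h.projective
    infer_instance
  | succ n ih =>
    obtain ⟨P, p, hP, hp, hK⟩ := h.exists_ker
    have := ih hK
    exact hasProjectiveDimensionLT_of_ker p hp (n + 1)

end ProjectiveDimension

section FiniteType

open ModuleCat

variable {R : Type} [Ring R]

theorem moduleTypeFPn_zero_of_finite {M : ModuleCat.{v} R} [Module.Finite R M] :
    ModuleTypeFPn R M 0 := by
  obtain ⟨s, hs⟩ := Module.Finite.fg_top (R := R) (M := M)
  let p : of R (s →₀ R) ⟶ M := ofHom (Finsupp.linearCombination R (↑))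
  have hp : Function.Surjective (Finsupp.linearCombination R ((↑) : s → M)) := by
    rw [← LinearMap.range_eq_top, Finsupp.range_linearCombination, Subtype.range_coe_subtype]
    exact hs
  exact ⟨consObj _ fun _ => of R (LinearMap.ker p.hom), consHom p (fun _ => 0) (𝟙 _), p,
    fun | 0, _ => inferInstanceAs (Module.Finite R (s →₀ R)),
    fun | 0, _ => inferInstanceAs (Module.Free R (s →₀ R)),
    hp, exact_consHom_zero fun x => ⟨x, rfl⟩, fun i hi => by omega⟩

theorem moduleTypeFPn_succ_iff {M : ModuleCat.{v} R} {n : ℕ} :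
    ModuleTypeFPn R M (n + 1) ↔ ∃ (P : ModuleCat.{v} R) (p : P ⟶ M), Module.Finite R P ∧
      Module.Free R P ∧ Function.Surjective p ∧ ModuleTypeFPn R (of R (LinearMap.ker p.hom)) n := by
  constructor
  · rintro ⟨F, d, ε, hfin, hfree, hε, h0, hex⟩
    refine ⟨F 0, ε, hfin 0 (by omega), hfree 0 (by omega), hε, ?_⟩
    cases n with
    | zero =>
      have := hfin 1 le_rfl
      have := Module.Finite.of_surjective _ (kerLift_surjective h0)
      exact moduleTypeFPn_zero_of_finite
    | succ n =>
      exact ⟨fun i => F (i + 1), fun i => d (i + 1), kerLift (d 0) ε h0,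
        fun i hi => hfin (i + 1) (by omega), fun i hi => hfree (i + 1) (by omega),
        kerLift_surjective h0, (exact_kerLift_iff _ h0).2 (hex 0 (by omega)),
        fun i hi => hex (i + 1) (by omega)⟩
  · rintro ⟨P, p, hPfin, hPfree, hp, F, d, ε, hfin, hfree, hε, h0, hex⟩
    refine ⟨consObj P F, consHom p d ε, p, ?_, ?_, hp, exact_consHom_zero hε, ?_⟩
    · rintro (_ | i) hi
      exacts [hPfin, hfin i (by omega)]
    · rintro (_ | i) hi
      exacts [hPfree, hfree i (by omega)]
    · rintro (_ | i) hi
      exacts [exact_consHom_one h0, hex i (by omega)]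

end FiniteType

section Tor

open ModuleCat

/-- `Tor_{k+1}^R(D, M) = 0`, computed from every projective resolution of `M`. -/
def TorSuccVanishes (R : Type) [Ring R] (D : Type) [AddCommGroup D] [Module Rᵐᵒᵖ D]
    (M : ModuleCat.{0} R) (k : ℕ) : Prop :=
  ∀ (F : ℕ → ModuleCat R) (d : ∀ i, F (i + 1) ⟶ F i) (ε : F 0 ⟶ M),
    (∀ i, Module.Projective R (F i)) → Function.Surjective ε → Function.Exact (d 0) ε →
    (∀ i, Function.Exact (d (i + 1)) (d i)) →
    Function.Exact (NCTensor.map R D (d (k + 1)).hom) (NCTensor.map R D (d k).hom)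

variable {R : Type} [Ring R] {D : Type} [AddCommGroup D] [Module Rᵐᵒᵖ D]

theorem TorSuccVanishes.ker {M P : ModuleCat.{0} R} {k : ℕ} (h : TorSuccVanishes R D M (k + 1))
    [Module.Projective R P] (p : P ⟶ M) (hp : Function.Surjective p) :
    TorSuccVanishes R D (of R (LinearMap.ker p.hom)) k := by
  intro F d ε hproj hε h0 hex
  refine h (consObj P F) (consHom p d ε) p (fun | 0 => ‹_› | i + 1 => hproj i) hp
    (exact_consHom_zero hε) ?_
  rintro (_ | i)
  exacts [exact_consHom_one h0, hex i]

theorem TorSuccVanishes.injective_map_subtype {M P : ModuleCat.{0} R}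
    (h : TorSuccVanishes R D M 0) [Module.Projective R P] (p : P ⟶ M) (hp : Function.Surjective p)
    [Module.Projective R (LinearMap.ker p.hom)] :
    Function.Injective (NCTensor.map R D (LinearMap.ker p.hom).subtype) := by
  let K := of R (LinearMap.ker p.hom)
  let T : ℕ → ModuleCat.{0} R := consObj K fun _ => of R PUnit
  have exact_T (i : ℕ) (f : T (i + 2) ⟶ T (i + 1)) (g : T (i + 1) ⟶ T i) : Function.Exact f g :=
    fun x => ⟨fun _ => ⟨0, Subsingleton.elim (α := PUnit) _ _⟩,
      fun _ => by rw [Subsingleton.elim (α := PUnit) x 0]; exact g.hom.map_zero⟩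
  have h₁ := h (consObj P T) (consHom p (fun _ => 0) (𝟙 K)) p
    (fun | 0 => ‹_› | 1 => ‹_› | _ + 2 => inferInstanceAs (Module.Projective R PUnit)) hp
    (exact_consHom_zero fun x => ⟨x, rfl⟩)
    (fun | 0 => exact_consHom_one fun x => ⟨fun hx => ⟨0, (map_zero _).trans hx.symm⟩,
            by rintro ⟨y, rfl⟩; rfl⟩
         | i + 1 => exact_T i _ _)
  have : Subsingleton (consObj P T 2) := inferInstanceAs (Subsingleton PUnit)
  rw [Subsingleton.elim (NCTensor.map R D _) 0, LinearMap.exact_zero_iff_injective] at h₁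
  exact h₁

end Tor

theorem moduleTypeFPn_succ_of_torSuccVanishes {R : Type} [Ring R] {D : Type} [DivisionRing D]
    [Module Rᵐᵒᵖ D] [SMulCommClass Rᵐᵒᵖ D D]
    (hD : Function.Injective fun r : R => MulOpposite.op r • (1 : D)) (k : ℕ) {M : ModuleCat.{0} R}
    [HasProjectiveDimensionLE M (k + 1)] (hTor : TorSuccVanishes R D M k)
    (hM : ModuleTypeFPn R M k) : ModuleTypeFPn R M (k + 1) := by
  induction k generalizing M with
  | zero =>
    obtain ⟨F, d, ε, hfin, hfree, hε, -⟩ := hM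
    have := hfin 0 le_rfl
    have := hfree 0 le_rfl
    have : Module.Projective R (F 0) := .of_free
    have := hasProjectiveDimensionLT_ker ε hε 0
    have : Module.Projective R (LinearMap.ker ε.hom) := (IsProjective.iff_projective _).2
      (projective_iff_hasProjectiveDimensionLT_one.2 this)
    have := NCTensor.finite_of_map_injective (D := D) _ (hTor.injective_map_subtype ε hε)
    have := NCTensor.finite_of_projective (X := LinearMap.ker ε.hom) hD
    exact moduleTypeFPn_succ_iff.2 ⟨F 0, ε, ‹_›, ‹_›, hε, moduleTypeFPn_zero_of_finite⟩
  | succ k ih =>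
    obtain ⟨P, p, hPfin, hPfree, hp, hK⟩ := moduleTypeFPn_succ_iff.1 hM
    have : Module.Projective R P := .of_free
    have := hasProjectiveDimensionLT_ker p hp (k + 1)
    exact moduleTypeFPn_succ_iff.2 ⟨P, p, hPfin, hPfree, hp, ih (hTor.ker p hp) hK⟩

theorem coherence_of_weak_dimension_general
    (R : Type) [Ring R] (D : Type) [DivisionRing D]
    (ι : R →+* D) (hι : Function.Injective ι)
    (n m : ℕ) (hnm : n = m + 1)
    -- `R` has left global dimension `n`
    (hgl : ∀ M : ModuleCat R, HasProjResLen R M n) :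
    letI : Module Rᵐᵒᵖ D := Module.compHom D (RingHom.op ι)
    -- `D` has weak dimension at most `n - 1` as a right `R`-module:
    -- `Tor_n^R(D, M) = 0` for every left `R`-module `M`
    (∀ (M : ModuleCat R) (F : ℕ → ModuleCat R) (d : ∀ i, F (i + 1) ⟶ F i) (ε : F 0 ⟶ M),
      (∀ i, Module.Projective R (F i)) → Function.Surjective ε → Function.Exact (d 0) ε →
      (∀ i, Function.Exact (d (i + 1)) (d i)) →
      Function.Exact (NCTensor.map R D ((d (m + 1)).hom : F (m + 2) →ₗ[R] F (m + 1)))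
        (NCTensor.map R D ((d m).hom : F (m + 1) →ₗ[R] F m))) →
    -- conclusion: `R` is left `(n-1)`-coherent
    ∀ I : Ideal R, ModuleTypeFPn R (ModuleCat.of R I) m → ModuleTypeFPn R (ModuleCat.of R I) n := by
  intro hTor I hI
  subst hnm
  let : Module Rᵐᵒᵖ D := Module.compHom D (RingHom.op ι)
  have : SMulCommClass Rᵐᵒᵖ D D := ⟨fun r d e => mul_assoc d e (ι r.unop)⟩
  have hD : Function.Injective fun r : R => MulOpposite.op r • (1 : D) := by
    change Function.Injective fun r => 1 * ι r
    simpa only [one_mul] using hι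
  have := hasProjectiveDimensionLE_of_hasProjResLen (hgl ((ModuleCat.uliftFunctor R).obj (.of R I)))
  have := hasProjectiveDimensionLT_of_uliftFunctor (ModuleCat.of R I) (m + 1)
  exact moduleTypeFPn_succ_of_torSuccVanishes hD m (hTor _) hI

/-- Let `R` be a ring of left global dimension `n` that embeds into a division ring `D`
such that `D`, viewed as a right `R`-module via the embedding, has weak dimension at most
`n - 1`, i.e. `Tor_n^R(D, M) = 0` for every left `R`-module `M` (expressed by saying that
tensoring any projective resolution of `M` with `D` over `R` yields a complex exact at
position `n`).  Then every left ideal of `R` of type `FP_{n-1}` is of type `FP_n`;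
that is, `R` is left `(n-1)`-coherent. -/
theorem coherence_of_weak_dimension
    (R : Type) [Ring R] (D : Type) [DivisionRing D]
    (ι : R →+* D) (hι : Function.Injective ι)
    (n m : ℕ) (hnm : n = m + 1)
    -- `R` has left global dimension `n`
    (hgl : ∀ M : ModuleCat R, HasProjResLen R M n)
    (hglmin : ∀ l : ℕ, (∀ M : ModuleCat R, HasProjResLen R M l) → n ≤ l) :
    letI : Module Rᵐᵒᵖ D := Module.compHom D (RingHom.op ι)
    -- `D` has weak dimension at most `n - 1` as a right `R`-module:
    -- `Tor_n^R(D, M) = 0` for every left `R`-module `M`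
    (∀ (M : ModuleCat R) (F : ℕ → ModuleCat R) (d : ∀ i, F (i + 1) ⟶ F i) (ε : F 0 ⟶ M),
      (∀ i, Module.Projective R (F i)) → Function.Surjective ε → Function.Exact (d 0) ε →
      (∀ i, Function.Exact (d (i + 1)) (d i)) →
      Function.Exact (NCTensor.map R D ((d (m + 1)).hom : F (m + 2) →ₗ[R] F (m + 1)))
        (NCTensor.map R D ((d m).hom : F (m + 1) →ₗ[R] F m))) →
    -- conclusion: `R` is left `(n-1)`-coherent
    ∀ I : Ideal R, ModuleTypeFPn R (ModuleCat.of R I) m → ModuleTypeFPn R (ModuleCat.of R I) n :=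
  coherence_of_weak_dimension_general R D ι hι n m hnm hgl
end
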